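/- Suppose additionally that y >= sqrt(1 - (x - 1/2)^2) + sqrt(3)/2 (region R2_2). Then the optimal radius for packings of 2 equal circles satisfies r_2(x,y) = 1/2. -/

import Mathlib

/-!
Since `(1,0) ∈ Λ`, a circle meets its own translate by `(1,0)` unless `r ≤ 1/2`. Conversely, take
the centres `0` and `d = (1/2, √3/2)`. As `y ≥ √3`, every nonzero lattice vector has length at
least `1`. Among the vectors `d + m(1,0) + n(x,y)`, those with `n ≠ -1` are long for the same
reason, and for `n = -1` the first coordinate is smallest at `m = 0`; the region's inequality is
`(x - 1/2)² + (y - √3/2)² ≥ 1`, i.e. `‖d - (x,y)‖ ≥ 1`.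
-/

noncomputable section

/-- The point `(a, b)` in the Euclidean plane. -/
def pt (a b : ℝ) : EuclideanSpace ℝ (Fin 2) :=
  (WithLp.equiv 2 (Fin 2 → ℝ)).symm ![a, b]

/-- The lattice generated by `v1 = (1,0)` and `v2 = (x,y)`. -/
def TLat (x y : ℝ) : Set (EuclideanSpace ℝ (Fin 2)) :=
  {v | ∃ m n : ℤ, v = (m : ℝ) • pt 1 0 + (n : ℝ) • pt x y}

/-- `p` is a packing of `k` equal circles of radius `r` on the flat torus `ℝ²/Λ(x,y)`. -/
def IsPacking (x y : ℝ) {k : ℕ} (r : ℝ) (p : Fin k → EuclideanSpace ℝ (Fin 2)) : Prop :=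
  ∀ i j : Fin k, ∀ l ∈ TLat x y, (i ≠ j ∨ l ≠ 0) → 2 * r ≤ ‖p i - p j + l‖

/-- The optimal (supremal) radius for packings of `k` equal circles on the torus `ℝ²/Λ(x,y)`. -/
def optRadius (x y : ℝ) (k : ℕ) : ℝ :=
  sSup {r : ℝ | 0 ≤ r ∧ ∃ p : Fin k → EuclideanSpace ℝ (Fin 2), IsPacking x y r p}

open Real

lemma pt_add (a b c d : ℝ) : pt a b + pt c d = pt (a + c) (b + d) := by
  ext i; fin_cases i <;> simp [pt]

lemma pt_smul (r a b : ℝ) : r • pt a b = pt (r * a) (r * b) := by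
  ext i; fin_cases i <;> simp [pt]

lemma pt_zero : pt 0 0 = 0 := by
  ext i; fin_cases i <;> simp [pt]

lemma norm_pt (a b : ℝ) : ‖pt a b‖ = √(a ^ 2 + b ^ 2) := by
  simp [EuclideanSpace.norm_eq, pt, Fin.sum_univ_two, sq_abs]

lemma one_le_norm_pt {a b : ℝ} (h : 1 ≤ a ^ 2 + b ^ 2) : 1 ≤ ‖pt a b‖ := by
  rwa [norm_pt, one_le_sqrt]

section Lattice

variable {x y : ℝ}

lemma mem_TLat_iff {l : EuclideanSpace ℝ (Fin 2)} :
    l ∈ TLat x y ↔ ∃ m n : ℤ, l = pt (m + n * x) (n * y) := by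
  refine exists₂_congr fun m n => ?_
  rw [pt_smul, pt_smul, pt_add]
  ring_nf

lemma neg_mem_TLat {l : EuclideanSpace ℝ (Fin 2)} (hl : l ∈ TLat x y) : -l ∈ TLat x y := by
  obtain ⟨m, n, rfl⟩ := hl
  exact ⟨-m, -n, by push_cast; rw [neg_add, neg_smul, neg_smul]⟩

lemma pt_one_zero_mem_TLat : pt 1 0 ∈ TLat x y :=
  ⟨1, 0, by simp⟩

end Lattice

section Packing

variable {x y r : ℝ} {k : ℕ} {p : Fin k → EuclideanSpace ℝ (Fin 2)}

lemma IsPacking.le_half (hp : IsPacking x y r p) (i : Fin k) : r ≤ 1 / 2 := by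
  have hne : pt 1 0 ≠ 0 := fun h => by simpa [h] using norm_pt 1 0
  have := hp i i (pt 1 0) pt_one_zero_mem_TLat (Or.inr hne)
  rw [sub_self, zero_add, norm_pt] at this
  norm_num at this
  linarith

lemma optRadius_eq_half_of_isPacking (hp : IsPacking x y (1 / 2) p) (i : Fin k) :
    optRadius x y k = 1 / 2 := by
  have hmem : (1 / 2 : ℝ) ∈ {r : ℝ | 0 ≤ r ∧ ∃ p : Fin k → EuclideanSpace ℝ (Fin 2),
      IsPacking x y r p} := ⟨by norm_num, p, hp⟩
  have hub : ∀ r ∈ {r : ℝ | 0 ≤ r ∧ ∃ p : Fin k → EuclideanSpace ℝ (Fin 2),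
      IsPacking x y r p}, r ≤ 1 / 2 := fun r ⟨_, _, hq⟩ => hq.le_half i
  exact le_antisymm (csSup_le ⟨_, hmem⟩ hub) (le_csSup ⟨_, hub⟩ hmem)

lemma isPacking_zero_pair (d : EuclideanSpace ℝ (Fin 2))
    (hlat : ∀ l ∈ TLat x y, l ≠ 0 → 2 * r ≤ ‖l‖)
    (hd : ∀ l ∈ TLat x y, 2 * r ≤ ‖d + l‖) :
    IsPacking x y r ![0, d] := by
  intro i j l hl hij
  fin_cases i <;> fin_cases j
  · simpa using hlat l hl (by simpa using hij)
  · have hflip : ‖-d + l‖ = ‖d + -l‖ := by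
      rw [← norm_neg]; congr 1; abel
    simpa [hflip] using hd (-l) (neg_mem_TLat hl)
  · simpa using hd l hl
  · simpa using hlat l hl (by simpa using hij)

end Packing

lemma sq_le_sq_int_add {t : ℝ} (ht : |t| ≤ 1 / 2) (m : ℤ) : t ^ 2 ≤ (m + t) ^ 2 := by
  obtain ⟨ht₁, ht₂⟩ := abs_le.mp ht
  have hdiff : (m + t) ^ 2 - t ^ 2 = m * (m + 2 * t) := by ring
  rcases lt_trichotomy m 0 with hm | rfl | hm
  · have : (m : ℝ) ≤ -1 := mod_cast Int.le_sub_one_of_lt hm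
    nlinarith [mul_nonneg_of_nonpos_of_nonpos (by linarith : (m : ℝ) ≤ 0)
      (by linarith : (m : ℝ) + 2 * t ≤ 0)]
  · simp
  · have : (1 : ℝ) ≤ m := mod_cast hm
    nlinarith [mul_nonneg (by linarith : (0 : ℝ) ≤ m) (by linarith : 0 ≤ (m : ℝ) + 2 * t)]

lemma one_le_int_sq {n : ℤ} (hn : n ≠ 0) : (1 : ℝ) ≤ (n : ℝ) ^ 2 :=
  mod_cast (one_le_sq_iff_one_le_abs _).mpr (Int.one_le_abs hn)

lemma one_le_norm_of_mem_TLat {x y : ℝ} (hy : 1 ≤ y) {l : EuclideanSpace ℝ (Fin 2)}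
    (hl : l ∈ TLat x y) (h0 : l ≠ 0) : 1 ≤ ‖l‖ := by
  obtain ⟨m, n, rfl⟩ := mem_TLat_iff.mp hl
  apply one_le_norm_pt
  rcases eq_or_ne n 0 with rfl | hn
  · have hm : m ≠ 0 := by rintro rfl; simp [pt_zero] at h0
    simpa using one_le_int_sq hm
  · have : 1 ≤ ((n : ℝ) * y) ^ 2 := by
      rw [mul_pow]; exact one_le_mul_of_one_le_of_one_le (one_le_int_sq hn) (by nlinarith)
    nlinarith [sq_nonneg ((m : ℝ) + n * x)]

lemma sqrt_three_le_of_region {x y : ℝ} (hx0 : 0 ≤ x) (hx1 : x ≤ 1 / 2)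
    (hreg : √(1 - (x - 1 / 2) ^ 2) + √3 / 2 ≤ y) : √3 ≤ y := by
  have : √3 / 2 ≤ √(1 - (x - 1 / 2) ^ 2) :=
    le_sqrt_of_sq_le (by nlinarith [sq_sqrt (show (0 : ℝ) ≤ 3 by norm_num)])
  linarith

lemma one_le_sq_add_sq_of_region {x y : ℝ} (hreg : √(1 - (x - 1 / 2) ^ 2) + √3 / 2 ≤ y) :
    1 ≤ (x - 1 / 2) ^ 2 + (y - √3 / 2) ^ 2 := by
  have := (sqrt_le_iff.mp (show √(1 - (x - 1 / 2) ^ 2) ≤ y - √3 / 2 by linarith)).2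
  linarith

lemma one_le_norm_pt_half_add_of_mem_TLat {x y : ℝ} (hx0 : 0 ≤ x) (hx1 : x ≤ 1 / 2)
    (hy : √3 ≤ y) (hsq : 1 ≤ (x - 1 / 2) ^ 2 + (y - √3 / 2) ^ 2) {l : EuclideanSpace ℝ (Fin 2)}
    (hl : l ∈ TLat x y) : 1 ≤ ‖pt (1 / 2) (√3 / 2) + l‖ := by
  have hs : √3 ^ 2 = 3 := sq_sqrt (by norm_num)
  have hs1 : 1 ≤ √3 := by nlinarith [sqrt_nonneg 3]
  obtain ⟨m, n, rfl⟩ := mem_TLat_iff.mp hl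
  rw [pt_add]
  apply one_le_norm_pt
  obtain hn | rfl | rfl | hn : n ≤ -2 ∨ n = -1 ∨ n = 0 ∨ 1 ≤ n := by omega
  · have : (n : ℝ) ≤ -2 := mod_cast hn
    have : √3 / 2 + n * y ≤ -1 := by nlinarith
    nlinarith [sq_nonneg ((1 : ℝ) / 2 + (m + n * x))]
  · have := sq_le_sq_int_add (t := 1 / 2 - x) (abs_le.mpr ⟨by linarith, by linarith⟩) m
    push_cast
    nlinarith
  · have := sq_le_sq_int_add (t := 1 / 2) (by norm_num [abs_of_pos]) m
    push_cast
    nlinarith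
  · have : (1 : ℝ) ≤ n := mod_cast hn
    have : 1 ≤ √3 / 2 + n * y := by nlinarith
    nlinarith [sq_nonneg ((1 : ℝ) / 2 + (m + n * x))]

theorem two_circles_region_R2_general (x y : ℝ) (hx0 : 0 ≤ x) (hx1 : x ≤ 1 / 2)
    (hreg : Real.sqrt (1 - (x - 1 / 2) ^ 2) + Real.sqrt 3 / 2 ≤ y)
    : optRadius x y 2 = 1 / 2 := by
  have hy := sqrt_three_le_of_region hx0 hx1 hreg
  refine optRadius_eq_half_of_isPacking (isPacking_zero_pair (pt (1 / 2) (√3 / 2)) ?_ ?_) 0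
  · intro l hl h0
    simpa using one_le_norm_of_mem_TLat ((one_le_sqrt.mpr (by norm_num)).trans hy) hl h0
  · intro l hl
    simpa using one_le_norm_pt_half_add_of_mem_TLat hx0 hx1 hy
      (one_le_sq_add_sq_of_region hreg) hl

theorem two_circles_region_R2 (x y : ℝ) (hxy : 1 ≤ x ^ 2 + y ^ 2) (hy : 0 < y) (hx0 : 0 ≤ x) (hx1 : x ≤ 1 / 2)
    (hreg : Real.sqrt (1 - (x - 1 / 2) ^ 2) + Real.sqrt 3 / 2 ≤ y)
    : optRadius x y 2 = 1 / 2 :=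
  two_circles_region_R2_general x y hx0 hx1 hreg
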